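/- For all connected graphs G and H, each with at least two vertices, q(G □ H) > 1/2. -/
import Mathlib


open SimpleGraph Set
open scoped Classical

/-- The degree ratio of a vertex `v` with respect to the partition `(s, sᶜ)`:
the size of its closed neighborhood inside its own side divided by the size of
its closed neighborhood in `G`. -/
noncomputable def vertexRatio {V : Type*} (G : SimpleGraph V) (s : Set V) (v : V) : ℝ :=
  (((G.neighborSet v ∩ (if v ∈ s then s else sᶜ)).ncard : ℝ) + 1) /
    (((G.neighborSet v).ncard : ℝ) + 1)

/-- The worst (minimum) degree ratio over all vertices, for the partition `(s, sᶜ)`. -/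
noncomputable def minRatio {V : Type*} (G : SimpleGraph V) (s : Set V) : ℝ :=
  sInf (Set.range (vertexRatio G s))

/-- The optimal degree ratio `q(G)`: the maximum over all nontrivial partitions
of the worst degree ratio. -/
noncomputable def degreeRatio {V : Type*} (G : SimpleGraph V) : ℝ :=
  sSup { r : ℝ | ∃ s : Set V, s.Nonempty ∧ sᶜ.Nonempty ∧ r = minRatio G s }

private lemma vertexRatio_le_one {U : Type*} [Fintype U] (P : SimpleGraph U) (s : Set U)
    (v : U) : vertexRatio P s v ≤ 1 := by
  unfold vertexRatio
  rw [div_le_one (by positivity)]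
  have h : (P.neighborSet v ∩ (if v ∈ s then s else sᶜ)).ncard ≤ (P.neighborSet v).ncard :=
    Set.ncard_le_ncard Set.inter_subset_left (Set.toFinite _)
  have : ((P.neighborSet v ∩ (if v ∈ s then s else sᶜ)).ncard : ℝ)
      ≤ ((P.neighborSet v).ncard : ℝ) := by exact_mod_cast h
  linarith

private lemma half_lt_degreeRatio {U : Type*} [Fintype U] [Nonempty U] (P : SimpleGraph U)
    (s : Set U) (hs : s.Nonempty) (hsc : sᶜ.Nonempty)
    (hv : ∀ v : U, (P.neighborSet v).ncard ≤
      2 * (P.neighborSet v ∩ (if v ∈ s then s else sᶜ)).ncard) :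
    1 / 2 < degreeRatio P := by
  have hpos : ∀ v : U, (1 : ℝ) / 2 < vertexRatio P s v := by
    intro v
    unfold vertexRatio
    rw [div_lt_div_iff₀ (by norm_num) (by positivity)]
    have h : (P.neighborSet v).ncard
        < 2 * (P.neighborSet v ∩ (if v ∈ s then s else sᶜ)).ncard + 1 := by
      have := hv v; omega
    have : ((P.neighborSet v).ncard : ℝ)
        < 2 * ((P.neighborSet v ∩ (if v ∈ s then s else sᶜ)).ncard : ℝ) + 1 := by
      exact_mod_cast h
    linarith
  have hfin : (Set.range (vertexRatio P s)).Finite := Set.finite_range _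
  have hne : (Set.range (vertexRatio P s)).Nonempty := Set.range_nonempty _
  have hmin : 1 / 2 < minRatio P s := by
    obtain ⟨v, hv'⟩ := hne.csInf_mem hfin
    rw [minRatio, ← hv']
    exact hpos v
  have hbdd : BddAbove { r : ℝ | ∃ t : Set U, t.Nonempty ∧ tᶜ.Nonempty ∧ r = minRatio P t } := by
    refine ⟨1, ?_⟩
    rintro r ⟨t, -, -, rfl⟩
    obtain ⟨v0⟩ := ‹Nonempty U›
    calc minRatio P t ≤ vertexRatio P t v0 :=
          csInf_le (Set.Finite.bddBelow (Set.finite_range _)) ⟨v0, rfl⟩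
      _ ≤ 1 := vertexRatio_le_one P t v0
  have hmem : minRatio P s ∈ { r : ℝ | ∃ t : Set U, t.Nonempty ∧ tᶜ.Nonempty ∧ r = minRatio P t } :=
    ⟨s, hs, hsc, rfl⟩
  exact lt_of_lt_of_le hmin (le_csSup hbdd hmem)

private lemma boxProd_nbhd_ncard {V W : Type*} [Fintype V] [Fintype W]
    (G : SimpleGraph V) (H : SimpleGraph W) (g : V) (h : W) :
    ((G □ H).neighborSet (g, h)).ncard
      = (G.neighborSet g).ncard + (H.neighborSet h).ncard := by
  have hdecomp : (G □ H).neighborSet (g, h)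
      = (fun a => (a, h)) '' G.neighborSet g ∪ (fun b => (g, b)) '' H.neighborSet h := by
    ext ⟨a, b⟩
    simp only [mem_neighborSet, boxProd_adj, Set.mem_union, Set.mem_image]
    constructor
    · rintro (⟨hadj, rfl⟩ | ⟨hadj, rfl⟩)
      · exact Or.inl ⟨a, hadj, rfl⟩
      · exact Or.inr ⟨b, hadj, rfl⟩
    · rintro (⟨a', ha', he⟩ | ⟨b', hb', he⟩)
      · cases he; exact Or.inl ⟨ha', rfl⟩
      · cases he; exact Or.inr ⟨hb', rfl⟩
  have inj1 : Function.Injective (fun a : V => (a, h)) :=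
    fun x y hxy => congrArg Prod.fst hxy
  have inj2 : Function.Injective (fun b : W => (g, b)) :=
    fun x y hxy => congrArg Prod.snd hxy
  have hdisj : Disjoint ((fun a => (a, h)) '' G.neighborSet g)
      ((fun b => (g, b)) '' H.neighborSet h) := by
    rw [Set.disjoint_left]
    rintro p ⟨a, ha, rfl⟩ ⟨b, hb, he⟩
    have : g = a := congrArg Prod.fst he
    subst this
    exact G.irrefl ha
  rw [hdecomp, Set.ncard_union_eq hdisj (Set.toFinite _) (Set.toFinite _),
    Set.ncard_image_of_injective _ inj1, Set.ncard_image_of_injective _ inj2]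

private lemma nbhd_nonempty {V : Type*} [Nontrivial V]
    (G : SimpleGraph V) (hG : G.Connected) (g : V) : (G.neighborSet g).Nonempty := by
  obtain ⟨g', hg'⟩ := exists_ne g
  obtain ⟨w⟩ := hG.preconnected g g'
  rcases Nat.eq_zero_or_pos w.length with h0 | hpos
  · exact absurd (SimpleGraph.Walk.eq_of_length_eq_zero h0) hg'.symm
  · refine ⟨w.getVert 1, ?_⟩
    have := w.adj_getVert_succ (i := 0) hpos
    simpa [SimpleGraph.Walk.getVert_zero] using this

private lemma key_right {V W : Type*} [Fintype V] [Fintype W] [Nontrivial V] [Nontrivial W]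
    (G : SimpleGraph V) (H : SimpleGraph W) (h0 : W)
    (hd : ∀ g : V, 1 ≤ (G.neighborSet g).ncard)
    (hmin : ∀ g : V, (H.neighborSet h0).ncard ≤ (G.neighborSet g).ncard) :
    1 / 2 < degreeRatio (G □ H) := by
  obtain ⟨h1, hh1⟩ := exists_ne h0
  have : Nonempty V := inferInstance
  set s : Set (V × W) := {p | p.2 ≠ h0} with hsdef
  apply half_lt_degreeRatio (G □ H) s
  · exact ⟨(Classical.arbitrary V, h1), hh1⟩
  · refine ⟨(Classical.arbitrary V, h0), ?_⟩
    simp [hsdef]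
  · rintro ⟨g, h⟩
    rw [boxProd_nbhd_ncard]
    by_cases hh : h = h0
    · subst hh
      have hmem : ((g, h) : V × W) ∉ s := by simp [hsdef]
      rw [if_neg hmem]
      have hinner : (G □ H).neighborSet (g, h) ∩ sᶜ
          = (fun a => (a, h)) '' G.neighborSet g := by
        ext ⟨a, b⟩
        simp only [Set.mem_inter_iff, mem_neighborSet, boxProd_adj, Set.mem_compl_iff,
          hsdef, Set.mem_setOf_eq, not_not, Set.mem_image]
        constructor
        · rintro ⟨(⟨hadj, rfl⟩ | ⟨hadj, rfl⟩), hb⟩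
          · exact ⟨a, hadj, rfl⟩
          · exact absurd hb.symm (H.ne_of_adj hadj)
        · rintro ⟨a', ha', he⟩
          cases he
          exact ⟨Or.inl ⟨ha', rfl⟩, rfl⟩
      rw [hinner, Set.ncard_image_of_injective _ (fun x y hxy => congrArg Prod.fst hxy)]
      have := hmin g
      omega
    · have hmem : ((g, h) : V × W) ∈ s := by simpa [hsdef] using hh
      rw [if_pos hmem]
      have hinner : (G □ H).neighborSet (g, h) ∩ s
          = (fun a => (a, h)) '' G.neighborSet g
            ∪ (fun b => (g, b)) '' (H.neighborSet h \ {h0}) := by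
        ext ⟨a, b⟩
        simp only [Set.mem_inter_iff, mem_neighborSet, boxProd_adj, hsdef, Set.mem_setOf_eq,
          Set.mem_union, Set.mem_image, Set.mem_diff, Set.mem_singleton_iff]
        constructor
        · rintro ⟨(⟨hadj, rfl⟩ | ⟨hadj, rfl⟩), hb⟩
          · exact Or.inl ⟨a, hadj, rfl⟩
          · exact Or.inr ⟨b, ⟨hadj, hb⟩, rfl⟩
        · rintro (⟨a', ha', he⟩ | ⟨b', ⟨hb', hb0⟩, he⟩)
          · cases he; exact ⟨Or.inl ⟨ha', rfl⟩, hh⟩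
          · cases he; exact ⟨Or.inr ⟨hb', rfl⟩, hb0⟩
      have hdisj : Disjoint ((fun a => (a, h)) '' G.neighborSet g)
          ((fun b => (g, b)) '' (H.neighborSet h \ {h0})) := by
        rw [Set.disjoint_left]
        rintro p ⟨a, ha, rfl⟩ ⟨b, hb, he⟩
        have : g = a := congrArg Prod.fst he
        subst this
        exact G.irrefl ha
      rw [hinner, Set.ncard_union_eq hdisj (Set.toFinite _) (Set.toFinite _),
        Set.ncard_image_of_injective _ (fun x y hxy => congrArg Prod.fst hxy),
        Set.ncard_image_of_injective _ (fun x y hxy => congrArg Prod.snd hxy)]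
      have hsub : H.neighborSet h ⊆ (H.neighborSet h \ {h0}) ∪ {h0} := by
        intro x hx
        by_cases hx0 : x = h0
        · exact Or.inr hx0
        · exact Or.inl ⟨hx, hx0⟩
      have hcard : (H.neighborSet h).ncard ≤ (H.neighborSet h \ {h0}).ncard + 1 := by
        calc (H.neighborSet h).ncard
            ≤ ((H.neighborSet h \ {h0}) ∪ {h0}).ncard :=
              Set.ncard_le_ncard hsub (Set.toFinite _)
          _ ≤ (H.neighborSet h \ {h0}).ncard + ({h0} : Set W).ncard :=
              Set.ncard_union_le _ _
          _ = (H.neighborSet h \ {h0}).ncard + 1 := by rw [Set.ncard_singleton]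
      have := hd g
      omega

private lemma key_left {V W : Type*} [Fintype V] [Fintype W] [Nontrivial V] [Nontrivial W]
    (G : SimpleGraph V) (H : SimpleGraph W) (g0 : V)
    (hd : ∀ h : W, 1 ≤ (H.neighborSet h).ncard)
    (hmin : ∀ h : W, (G.neighborSet g0).ncard ≤ (H.neighborSet h).ncard) :
    1 / 2 < degreeRatio (G □ H) := by
  obtain ⟨g1, hg1⟩ := exists_ne g0
  have : Nonempty W := inferInstance
  set s : Set (V × W) := {p | p.1 ≠ g0} with hsdef
  apply half_lt_degreeRatio (G □ H) s
  · exact ⟨(g1, Classical.arbitrary W), hg1⟩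
  · refine ⟨(g0, Classical.arbitrary W), ?_⟩
    simp [hsdef]
  · rintro ⟨g, h⟩
    rw [boxProd_nbhd_ncard]
    by_cases hg : g = g0
    · subst hg
      have hmem : ((g, h) : V × W) ∉ s := by simp [hsdef]
      rw [if_neg hmem]
      have hinner : (G □ H).neighborSet (g, h) ∩ sᶜ
          = (fun b => (g, b)) '' H.neighborSet h := by
        ext ⟨a, b⟩
        simp only [Set.mem_inter_iff, mem_neighborSet, boxProd_adj, Set.mem_compl_iff,
          hsdef, Set.mem_setOf_eq, not_not, Set.mem_image]
        constructor
        · rintro ⟨(⟨hadj, rfl⟩ | ⟨hadj, rfl⟩), hb⟩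
          · exact absurd hb.symm (G.ne_of_adj hadj)
          · exact ⟨b, hadj, rfl⟩
        · rintro ⟨b', hb', he⟩
          cases he
          exact ⟨Or.inr ⟨hb', rfl⟩, rfl⟩
      rw [hinner, Set.ncard_image_of_injective _ (fun x y hxy => congrArg Prod.snd hxy)]
      have := hmin h
      omega
    · have hmem : ((g, h) : V × W) ∈ s := by simpa [hsdef] using hg
      rw [if_pos hmem]
      have hinner : (G □ H).neighborSet (g, h) ∩ s
          = (fun a => (a, h)) '' (G.neighborSet g \ {g0})
            ∪ (fun b => (g, b)) '' H.neighborSet h := by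
        ext ⟨a, b⟩
        simp only [Set.mem_inter_iff, mem_neighborSet, boxProd_adj, hsdef, Set.mem_setOf_eq,
          Set.mem_union, Set.mem_image, Set.mem_diff, Set.mem_singleton_iff]
        constructor
        · rintro ⟨(⟨hadj, rfl⟩ | ⟨hadj, rfl⟩), hb⟩
          · exact Or.inl ⟨a, ⟨hadj, hb⟩, rfl⟩
          · exact Or.inr ⟨b, hadj, rfl⟩
        · rintro (⟨a', ⟨ha', ha0⟩, he⟩ | ⟨b', hb', he⟩)
          · cases he; exact ⟨Or.inl ⟨ha', rfl⟩, ha0⟩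
          · cases he; exact ⟨Or.inr ⟨hb', rfl⟩, hg⟩
      have hdisj : Disjoint ((fun a => (a, h)) '' (G.neighborSet g \ {g0}))
          ((fun b => (g, b)) '' H.neighborSet h) := by
        rw [Set.disjoint_left]
        rintro p ⟨a, ha, rfl⟩ ⟨b, hb, he⟩
        have : g = a := congrArg Prod.fst he
        subst this
        exact G.irrefl ha.1
      rw [hinner, Set.ncard_union_eq hdisj (Set.toFinite _) (Set.toFinite _),
        Set.ncard_image_of_injective _ (fun x y hxy => congrArg Prod.fst hxy),
        Set.ncard_image_of_injective _ (fun x y hxy => congrArg Prod.snd hxy)]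
      have hsub : G.neighborSet g ⊆ (G.neighborSet g \ {g0}) ∪ {g0} := by
        intro x hx
        by_cases hx0 : x = g0
        · exact Or.inr hx0
        · exact Or.inl ⟨hx, hx0⟩
      have hcard : (G.neighborSet g).ncard ≤ (G.neighborSet g \ {g0}).ncard + 1 := by
        calc (G.neighborSet g).ncard
            ≤ ((G.neighborSet g \ {g0}) ∪ {g0}).ncard :=
              Set.ncard_le_ncard hsub (Set.toFinite _)
          _ ≤ (G.neighborSet g \ {g0}).ncard + ({g0} : Set V).ncard :=
              Set.ncard_union_le _ _
          _ = (G.neighborSet g \ {g0}).ncard + 1 := by rw [Set.ncard_singleton]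
      have := hd h
      omega

theorem stmt_17 {V W : Type*} [Fintype V] [Fintype W]
    (G : SimpleGraph V) (H : SimpleGraph W)
    (hG : G.Connected) (hH : H.Connected) (hV : Nontrivial V) (hW : Nontrivial W) :
    1 / 2 < degreeRatio (G □ H) := by
  haveI := hV
  haveI := hW
  obtain ⟨g0, -, hg0⟩ := Finset.exists_min_image Finset.univ
    (fun g : V => (G.neighborSet g).ncard) ⟨Classical.arbitrary V, Finset.mem_univ _⟩
  obtain ⟨h0, -, hh0⟩ := Finset.exists_min_image Finset.univ
    (fun h : W => (H.neighborSet h).ncard) ⟨Classical.arbitrary W, Finset.mem_univ _⟩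
  have hdG : ∀ g : V, 1 ≤ (G.neighborSet g).ncard := fun g =>
    (Set.ncard_pos (Set.toFinite _)).mpr (nbhd_nonempty G hG g)
  have hdH : ∀ h : W, 1 ≤ (H.neighborSet h).ncard := fun h =>
    (Set.ncard_pos (Set.toFinite _)).mpr (nbhd_nonempty H hH h)
  by_cases hle : (H.neighborSet h0).ncard ≤ (G.neighborSet g0).ncard
  · exact key_right G H h0 hdG (fun g => le_trans hle (hg0 g (Finset.mem_univ _)))
  · push_neg at hle
    exact key_left G H g0 hdH (fun h => le_trans hle.le (hh0 h (Finset.mem_univ _)))
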